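/- arXiv:2512.22721 — 3 statements merged into one kernel-verified Lean document; each statement's English description precedes it below -/
import Mathlib

section
/- Let Q and A be n×n real matrices, B an n×m real matrix, R an m×m real symmetric positive definite matrix, and P an n×n real symmetric positive semidefinite matrix, with Q symmetric positive semidefinite. Then the matrix Π := Q + AᵀPA − AᵀPB(R + BᵀPB)⁻¹BᵀPA is symmetric and positive semidefinite. -/
/-!
`Π` is the Schur complement of the positive definite block `R + BᴴPB` in the block matrix
`diag(Q, R) + [A B]ᴴ P [A B] = [[Q + AᴴPA, AᴴPB], [BᴴPA, R + BᴴPB]]`, which is positive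
semidefinite as a sum of two positive semidefinite matrices; a Schur complement of a positive
semidefinite matrix with respect to a positive definite block is positive semidefinite.
-/

open Matrix

/-- The one-step minimized quadratic coefficient
`Π = Q + AᵀPA − AᵀPB(R + BᵀPB)⁻¹BᵀPA`. -/
noncomputable def piStep {n m : ℕ} (Q A P : Matrix (Fin n) (Fin n) ℝ)
    (B : Matrix (Fin n) (Fin m) ℝ) (R : Matrix (Fin m) (Fin m) ℝ) :
    Matrix (Fin n) (Fin n) ℝ :=
  Q + Aᵀ * P * A - Aᵀ * P * B * (R + Bᵀ * P * B)⁻¹ * (Bᵀ * P * A)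

namespace Matrix

variable {l m n α : Type*} [Fintype l] [Fintype m] [Fintype n]

omit [Fintype l] [Fintype m] in
theorem conjTranspose_fromCols_mul_mul_fromCols [Semiring α] [StarRing α]
    (A : Matrix n l α) (B : Matrix n m α) (P : Matrix n n α) :
    (fromCols A B)ᴴ * P * fromCols A B =
      fromBlocks (Aᴴ * P * A) (Aᴴ * P * B) (Bᴴ * P * A) (Bᴴ * P * B) := by
  rw [conjTranspose_fromCols_eq_fromRows_conjTranspose, fromRows_mul, fromRows_mul, mul_fromCols,
    mul_fromCols, fromRows_fromCols_eq_fromBlocks]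

theorem PosSemidef.fromBlocks_zero [Ring α] [PartialOrder α] [StarRing α] [AddLeftMono α]
    {Q : Matrix l l α} {R : Matrix m m α} (hQ : Q.PosSemidef) (hR : R.PosSemidef) :
    (fromBlocks Q 0 0 R).PosSemidef := by
  classical
  have hQ' := hQ.conjTranspose_mul_mul_same (fromCols (1 : Matrix l l α) (0 : Matrix l m α))
  have hR' := hR.conjTranspose_mul_mul_same (fromCols (0 : Matrix m l α) (1 : Matrix m m α))
  rw [conjTranspose_fromCols_mul_mul_fromCols] at hQ' hR'
  simpa [fromBlocks_add] using hQ'.add hR'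

theorem PosSemidef.riccati_update [Field α] [PartialOrder α] [StarRing α] [StarOrderedRing α]
    [DecidableEq m] {Q : Matrix l l α} {P : Matrix n n α} {R : Matrix m m α}
    (hQ : Q.PosSemidef) (hP : P.PosSemidef) (hR : R.PosDef)
    (A : Matrix n l α) (B : Matrix n m α) :
    (Q + Aᴴ * P * A - Aᴴ * P * B * (R + Bᴴ * P * B)⁻¹ * (Bᴴ * P * A)).PosSemidef := by
  have hS : (R + Bᴴ * P * B).PosDef := hR.add_posSemidef (hP.conjTranspose_mul_mul_same B)
  have : Invertible (R + Bᴴ * P * B) := hS.isUnit.invertible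
  have hBPA : (Aᴴ * P * B)ᴴ = Bᴴ * P * A := by
    rw [conjTranspose_mul, conjTranspose_mul, hP.isHermitian.eq, conjTranspose_conjTranspose,
      Matrix.mul_assoc]
  have hblock := (hQ.fromBlocks_zero hR.posSemidef).add
    (hP.conjTranspose_mul_mul_same (fromCols A B))
  rw [conjTranspose_fromCols_mul_mul_fromCols, fromBlocks_add, zero_add, zero_add, ← hBPA,
    PosDef.fromBlocks₂₂ _ _ hS] at hblock
  rwa [hBPA] at hblock

end Matrix

theorem piStep_isSymm_posSemidef {n m : ℕ}
    (Q A P : Matrix (Fin n) (Fin n) ℝ)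
    (B : Matrix (Fin n) (Fin m) ℝ) (R : Matrix (Fin m) (Fin m) ℝ)
    (hR : R.PosDef) (hP : P.PosSemidef) (hQ : Q.PosSemidef) :
    (piStep Q A P B R).IsHermitian ∧ (piStep Q A P B R).PosSemidef := by
  have h : (piStep Q A P B R).PosSemidef := by
    simpa only [piStep, conjTranspose_eq_transpose_of_trivial] using hQ.riccati_update hP hR A B
  exact ⟨h.isHermitian, h⟩
end

section
/- Let N be a nonempty finite index set, α̃ : N → ℝ, and b > 0 a budget, and assume Σ_{n∈N} max(α̃(n), 0) ≥ b. Then there exists a unique θ ∈ ℝ with θ ≥ 0 such that Σ_{n∈N} max(α̃(n) − θ, 0) = b. -/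
/-! The level function `θ ↦ ∑ max (α n - θ) 0` is continuous, equals the positive
mass `∑ max (α n) 0 ≥ b` at `θ = 0` and vanishes once `θ` exceeds every `α n`, so it takes the value
`b` on `[0, ∑ max (α n) 0]` by the intermediate value theorem. Wherever it is positive some `α n`
lies above `θ`, and raising `θ` strictly lowers that term; since `b > 0`, the level is unique. -/

open Finset

namespace Waterfilling

variable {ι : Type*}

/-- The paper's `φ(θ)`: the mass of `α` above the water level `θ`. -/
def excess (s : Finset ι) (α : ι → ℝ) (θ : ℝ) : ℝ := ∑ n ∈ s, max (α n - θ) 0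

variable (s : Finset ι) (α : ι → ℝ)

theorem continuous_excess : Continuous (excess s α) :=
  continuous_finsetSum _ fun _ _ => (continuous_const.sub continuous_id).max continuous_const

theorem excess_zero : excess s α 0 = ∑ n ∈ s, max (α n) 0 := by
  simp only [excess, sub_zero]

variable {s α}

theorem excess_eq_zero_of_forall_le {θ : ℝ} (h : ∀ n ∈ s, α n ≤ θ) : excess s α θ = 0 :=
  sum_eq_zero fun n hn => max_eq_right (sub_nonpos.mpr (h n hn))

theorem excess_lt_of_lt {θ₁ θ₂ : ℝ} (hθ : θ₁ < θ₂) (hpos : 0 < excess s α θ₁) :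
    excess s α θ₂ < excess s α θ₁ := by
  obtain ⟨n, hn, hterm⟩ : ∃ n ∈ s, (0 : ℝ) < max (α n - θ₁) 0 :=
    exists_lt_of_sum_lt (by simpa only [sum_const_zero, excess] using hpos)
  have hαn : 0 < α n - θ₁ := (lt_max_iff.mp hterm).resolve_right (lt_irrefl 0)
  refine sum_lt_sum (fun _ _ => max_le_max (by linarith) le_rfl) ⟨n, hn, ?_⟩
  rw [max_eq_left hαn.le]
  exact max_lt (by linarith) (by linarith)

theorem eq_of_excess_eq {b θ₁ θ₂ : ℝ} (hb : 0 < b) (h₁ : excess s α θ₁ = b)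
    (h₂ : excess s α θ₂ = b) : θ₁ = θ₂ := by
  have key : ∀ {x y : ℝ}, excess s α x = b → excess s α y = b → ¬ x < y := fun hx hy hxy =>
    (excess_lt_of_lt hxy (hx ▸ hb)).ne (hy.trans hx.symm)
  exact le_antisymm (not_lt.mp (key h₂ h₁)) (not_lt.mp (key h₁ h₂))

end Waterfilling

open Waterfilling

theorem waterfilling_threshold_exists_unique_general {N : Type*} [Fintype N]
    (α : N → ℝ) (b : ℝ) (hb : 0 < b)
    (hsum : b ≤ ∑ n, max (α n) 0) :
    ∃! θ : ℝ, 0 ≤ θ ∧ ∑ n, max (α n - θ) 0 = b := by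
  set S := ∑ n, max (α n) 0
  have hS : 0 ≤ S := sum_nonneg fun _ _ => le_max_right _ _
  have hαS : ∀ n ∈ univ, α n ≤ S := fun n _ =>
    (le_max_left _ _).trans (single_le_sum (fun _ _ => le_max_right _ _) (mem_univ n))
  have hb_mem : b ∈ Set.Icc (excess univ α S) (excess univ α 0) :=
    ⟨(excess_eq_zero_of_forall_le hαS).trans_le hb.le, (excess_zero univ α).symm ▸ hsum⟩
  obtain ⟨θ, hθ, hθb⟩ := intermediate_value_Icc' hS (continuous_excess univ α).continuousOn hb_mem
  exact ⟨θ, ⟨hθ.1, hθb⟩, fun θ' ⟨_, hθ'b⟩ => eq_of_excess_eq hb hθ'b hθb⟩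

theorem waterfilling_threshold_exists_unique {N : Type*} [Fintype N] [Nonempty N]
    (α : N → ℝ) (b : ℝ) (hb : 0 < b)
    (hsum : b ≤ ∑ n, max (α n) 0) :
    ∃! θ : ℝ, 0 ≤ θ ∧ ∑ n, max (α n - θ) 0 = b :=
  waterfilling_threshold_exists_unique_general α b hb hsum
end

section
/- Let N be a nonempty finite index set, α̃ : N → ℝ, and b > 0 with Σ_{n∈N} max(α̃(n), 0) ≥ b, and let θ ≥ 0 be the unique real number with Σ_{n∈N} max(α̃(n) − θ, 0) = b. Define a⋆(n) := max(α̃(n) − θ, 0). Then a⋆ ∈ Δ_b, and a⋆ is the Euclidean projection of α̃ onto Δ_b: for every a ∈ Δ_b, Σ_{n∈N} (a(n) − α̃(n))² ≥ Σ_{n∈N} (a⋆(n) − α̃(n))², with equality if and only if a = a⋆. -/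
/-!
The water-filling vector `a⋆ = max (α - θ) 0` satisfies the variational inequality
`⟪a - a⋆, a⋆ - α⟫ ≥ 0` for every `a ∈ Δ_b`: writing `a⋆ - α = -θ + (a⋆ - (α - θ))`, the constant part
contributes `-θ · Σ (a - a⋆) = 0` because both vectors have total mass `b`, and `a⋆ - (α - θ)` is
nonnegative and supported where `a⋆ = 0`, so it pairs nonnegatively with `a - a⋆ = a ≥ 0`.
Expanding `‖a - α‖² = ‖a - a⋆‖² + 2⟪a - a⋆, a⋆ - α⟫ + ‖a⋆ - α‖²` then gives
`‖a⋆ - α‖² + ‖a - a⋆‖² ≤ ‖a - α‖²`, hence both the inequality and its equality case.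
-/

/-- The scaled simplex `Δ_b = { a | a(n) ≥ 0 for all n and Σ_n a(n) = b }`. -/
def scaledSimplex {N : Type*} [Fintype N] (b : ℝ) : Set (N → ℝ) :=
  {a | (∀ n, 0 ≤ a n) ∧ ∑ n, a n = b}

open Finset

section Projection

variable {N : Type*} [Fintype N] (a f α : N → ℝ)

theorem sum_sq_sub_eq_add_two_mul_add :
    ∑ n, (a n - α n) ^ 2 =
      ∑ n, (a n - f n) ^ 2 + 2 * ∑ n, (a n - f n) * (f n - α n) + ∑ n, (f n - α n) ^ 2 := by
  rw [mul_sum, ← sum_add_distrib, ← sum_add_distrib]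
  exact sum_congr rfl fun n _ => by ring

variable {a f α}

theorem sum_sq_sub_add_sum_sq_sub_le (h : 0 ≤ ∑ n, (a n - f n) * (f n - α n)) :
    ∑ n, (f n - α n) ^ 2 + ∑ n, (a n - f n) ^ 2 ≤ ∑ n, (a n - α n) ^ 2 := by
  rw [sum_sq_sub_eq_add_two_mul_add a f α]
  linarith

theorem sum_sq_sub_le_of_sum_mul_nonneg (h : 0 ≤ ∑ n, (a n - f n) * (f n - α n)) :
    ∑ n, (f n - α n) ^ 2 ≤ ∑ n, (a n - α n) ^ 2 :=
  le_of_add_le_of_nonneg_left (sum_sq_sub_add_sum_sq_sub_le h)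
    (sum_nonneg fun _ _ => sq_nonneg _)

theorem eq_of_sum_sq_sub_eq_of_sum_mul_nonneg (h : 0 ≤ ∑ n, (a n - f n) * (f n - α n))
    (heq : ∑ n, (a n - α n) ^ 2 = ∑ n, (f n - α n) ^ 2) : a = f := by
  have hzero : ∑ n, (a n - f n) ^ 2 = 0 :=
    le_antisymm (by linarith [sum_sq_sub_add_sum_sq_sub_le h])
      (sum_nonneg fun _ _ => sq_nonneg _)
  funext n
  have hn := (sum_eq_zero_iff_of_nonneg fun _ _ => sq_nonneg _).mp hzero n (mem_univ n)
  exact sub_eq_zero.mp (pow_eq_zero_iff two_ne_zero |>.mp hn)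

end Projection

section Waterfilling

variable {N : Type*} [Fintype N]

theorem sub_max_mul_max_sub_nonneg {x : ℝ} (hx : 0 ≤ x) (s : ℝ) :
    0 ≤ (x - max s 0) * (max s 0 - s) := by
  rcases le_total 0 s with hs | hs
  · simp [max_eq_left hs]
  · rw [max_eq_right hs]
    exact mul_nonneg (by linarith) (by linarith)

theorem waterfilling_mem_scaledSimplex (α : N → ℝ) (θ : ℝ) :
    (fun n => max (α n - θ) 0) ∈ scaledSimplex (N := N) (∑ n, max (α n - θ) 0) :=
  ⟨fun _ => le_max_right _ _, rfl⟩

theorem sum_mul_waterfilling_sub_nonneg {α a : N → ℝ} {θ : ℝ}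
    (ha : a ∈ scaledSimplex (N := N) (∑ n, max (α n - θ) 0)) :
    0 ≤ ∑ n, (a n - max (α n - θ) 0) * (max (α n - θ) 0 - α n) := by
  obtain ⟨ha_nonneg, ha_sum⟩ := ha
  have hmass : ∑ n, (a n - max (α n - θ) 0) = 0 := by
    rw [sum_sub_distrib, ha_sum, sub_self]
  calc (0 : ℝ) ≤ ∑ n, (a n - max (α n - θ) 0) * (max (α n - θ) 0 - (α n - θ)) :=
        sum_nonneg fun n _ => sub_max_mul_max_sub_nonneg (ha_nonneg n) _
    _ = ∑ n, (a n - max (α n - θ) 0) * (max (α n - θ) 0 - α n)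
          + θ * ∑ n, (a n - max (α n - θ) 0) := by
        rw [mul_sum, ← sum_add_distrib]
        exact sum_congr rfl fun n _ => by ring
    _ = _ := by rw [hmass, mul_zero, add_zero]

end Waterfilling

theorem waterfilling_is_euclidean_projection_general {N : Type*} [Fintype N]
    (α : N → ℝ) (b : ℝ)
    (θ : ℝ) (hθeq : ∑ n, max (α n - θ) 0 = b) :
    (fun n => max (α n - θ) 0) ∈ scaledSimplex (N := N) b ∧
    ∀ a : N → ℝ, a ∈ scaledSimplex (N := N) b →
      (∑ n, (max (α n - θ) 0 - α n) ^ 2 ≤ ∑ n, (a n - α n) ^ 2 ∧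
        ((∑ n, (a n - α n) ^ 2 = ∑ n, (max (α n - θ) 0 - α n) ^ 2) ↔
          a = fun n => max (α n - θ) 0)) := by
  subst hθeq
  refine ⟨waterfilling_mem_scaledSimplex α θ, fun a ha => ?_⟩
  have hvar := sum_mul_waterfilling_sub_nonneg ha
  exact ⟨sum_sq_sub_le_of_sum_mul_nonneg hvar,
    eq_of_sum_sq_sub_eq_of_sum_mul_nonneg hvar, fun h => h ▸ rfl⟩

theorem waterfilling_is_euclidean_projection {N : Type*} [Fintype N] [Nonempty N]
    (α : N → ℝ) (b : ℝ) (hb : 0 < b)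
    (hsum : b ≤ ∑ n, max (α n) 0)
    (θ : ℝ) (hθ : 0 ≤ θ) (hθeq : ∑ n, max (α n - θ) 0 = b) :
    (fun n => max (α n - θ) 0) ∈ scaledSimplex (N := N) b ∧
    ∀ a : N → ℝ, a ∈ scaledSimplex (N := N) b →
      (∑ n, (max (α n - θ) 0 - α n) ^ 2 ≤ ∑ n, (a n - α n) ^ 2 ∧
        ((∑ n, (a n - α n) ^ 2 = ∑ n, (max (α n - θ) 0 - α n) ^ 2) ↔
          a = fun n => max (α n - θ) 0)) :=
  waterfilling_is_euclidean_projection_general α b θ hθeq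
end
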